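/- For every n ≥ 1, every term-resolution proof of the empty term from the QCNF Φₙ contains at least 2ⁿ distinct terms (i.e. the proof has size at least exponential in n). -/

import Mathlib

/-!
Framework for prenex QCNF: variables are natural numbers; a quantifier prefix is
given by `ex : Var → Bool` (`ex v = true` iff variable `v` is existential), and
the prefix order on variables (hence on literals) is `<` on ℕ.
-/

abbrev Var := ℕ

/-- A literal: a variable together with a polarity (`pos = true` for `x`, `false` for `x̄`). -/
structure Lit where
  var : Var
  pos : Bool
deriving DecidableEq

/-- The complementary literal. -/
def Lit.neg (l : Lit) : Lit := ⟨l.var, !l.pos⟩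

/-- Clauses (disjunctions) and terms (conjunctions) are finite sets of literals. -/
abbrev Clause := Finset Lit
abbrev Term := Finset Lit

/-- A set of literals contains no complementary pair. -/
def LitSetOk (C : Finset Lit) : Prop := ∀ l ∈ C, l.neg ∉ C

instance (C : Finset Lit) : Decidable (LitSetOk C) :=
  inferInstanceAs (Decidable (∀ l ∈ C, l.neg ∉ C))

/-- The resOf on pivot literal `p` (used both for clauses and for terms). -/
def resOf (p : Lit) (A B : Finset Lit) : Finset Lit := A.erase p ∪ B.erase p.neg

/-- Resolution of `A` (containing `p`) with `B` (containing `p.neg`) is defined: the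
union of the side literals contains no complementary pair and neither `p` nor `p.neg`. -/
def ResOk (p : Lit) (A B : Finset Lit) : Prop :=
  p ∈ A ∧ p.neg ∈ B ∧ p ∉ resOf p A B ∧ p.neg ∉ resOf p A B ∧
    LitSetOk (resOf p A B)

instance (p : Lit) (A B : Finset Lit) : Decidable (ResOk p A B) :=
  inferInstanceAs (Decidable (p ∈ A ∧ p.neg ∈ B ∧ p ∉ resOf p A B ∧
    p.neg ∉ resOf p A B ∧ LitSetOk (resOf p A B)))

/-- ∀-reduction: `C'` results from `C` by removing every universal literal `l` such
that no existential literal `k ∈ C` satisfies `l < k`. -/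
def IsForallReduct (ex : Var → Bool) (C C' : Clause) : Prop :=
  ∀ l : Lit, l ∈ C' ↔ l ∈ C ∧ (ex l.var = true ∨ ∃ k ∈ C, ex k.var = true ∧ l.var < k.var)

/-- QU-resolution proofs of a clause from the matrix `φ` under the prefix `ex`:
every clause is in `φ`, or a QU-resOf of two earlier clauses (the pivot may be
universal), or results from an earlier clause by ∀-reduction. -/
inductive QUProof (ex : Var → Bool) (φ : Finset Clause) : Clause → Prop
  | ax {C : Clause} : C ∈ φ → QUProof ex φ C
  | res {A B : Clause} {p : Lit} : QUProof ex φ A → QUProof ex φ B → ResOk p A B →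
      QUProof ex φ (resOf p A B)
  | red {C C' : Clause} : QUProof ex φ C → IsForallReduct ex C C' → QUProof ex φ C'

/-- ∃-reduction: `T'` results from `T` by removing every existential literal `l` such
that no universal literal `k ∈ T` satisfies `l < k`. -/
def IsExistsReduct (ex : Var → Bool) (T T' : Term) : Prop :=
  ∀ l : Lit, l ∈ T' ↔ l ∈ T ∧ (ex l.var = false ∨ ∃ k ∈ T, ex k.var = false ∧ l.var < k.var)

/-- Model generation rule: `T` is generated from the matrix `φ` if every clause of `φ`
contains a literal belonging to `T`. -/
def ModelGen (φ : Finset Clause) (T : Term) : Prop := ∀ C ∈ φ, ∃ l ∈ C, l ∈ T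

/-- `π` is a term-resolution proof of the term `T` from the QCNF with prefix `ex` and
matrix `φ`: a finite sequence of terms ending in `T`, each generated by model
generation or obtained from earlier terms by ∃-reduction or term-resolution. -/
def IsTermResProof (ex : Var → Bool) (φ : Finset Clause) (π : List Term) (T : Term) : Prop :=
  π ≠ [] ∧ π.getLast? = some T ∧
    ∀ i : Fin π.length, LitSetOk (π.get i) ∧
      (ModelGen φ (π.get i) ∨
        (∃ j : Fin π.length, j < i ∧ IsExistsReduct ex (π.get j) (π.get i)) ∨
        (∃ j k : Fin π.length, j < i ∧ k < i ∧ ∃ p : Lit,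
          ResOk p (π.get j) (π.get k) ∧ π.get i = resOf p (π.get j) (π.get k)))

/-- Value of a literal under a total assignment. -/
def evalLit (σ : Var → Bool) (l : Lit) : Bool := if l.pos then σ l.var else !σ l.var

/-- A strategy assigns to each (existential) variable a Boolean function of the
universal assignment — the semantic counterpart of a propositional formula. -/
abbrev Strategy := Var → (Var → Bool) → Bool

/-- The total assignment induced by a strategy `M` and a universal assignment `τ`. -/
def Strategy.assign (ex : Var → Bool) (M : Strategy) (τ : Var → Bool) : Var → Bool :=
  fun v => if ex v then M v τ else τ v

/-- The definition of each existential variable depends only on the universal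
variables preceding it in the prefix. -/
def WellFormed (ex : Var → Bool) (M : Strategy) : Prop :=
  ∀ e, ex e = true → ∀ τ τ' : Var → Bool,
    (∀ u, ex u = false → u < e → τ u = τ' u) → M e τ = M e τ'

/-- `M` is a model of the QCNF with prefix `ex` and matrix `φ`: it is a well-formed
strategy and `M(φ)` is a tautology. -/
def IsModel (ex : Var → Bool) (φ : Finset Clause) (M : Strategy) : Prop :=
  WellFormed ex M ∧
    ∀ τ : Var → Bool, ∀ C ∈ φ, ∃ l ∈ C, evalLit (Strategy.assign ex M τ) l = true

/-- A term `T` agrees with an assignment `τ` to the universal variables iff there is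
no (universal) literal `l` with `l̄ ∈ T` and `τ(l) = 1`. -/
def Agrees (ex : Var → Bool) (τ : Var → Bool) (T : Term) : Prop :=
  ¬∃ l : Lit, ex l.var = false ∧ l.neg ∈ T ∧ evalLit τ l = true

/-- Edge `a → b` of the binary implication graph of `φ`: the binary clause
`a.neg ∨ b` is in `φ` (a clause `l₁ ∨ l₂` yields the edges `l̄₁ → l₂`, `l̄₂ → l₁`). -/
def ImpEdge (φ : Finset Clause) (a b : Lit) : Prop :=
  a ≠ b ∧ a.neg ≠ b ∧ ({a.neg, b} : Clause) ∈ φ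

/-- The existential literal `l` of the clause `C` is blocked in the matrix `φ`. -/
def BlockedIn (ex : Var → Bool) (φ : Finset Clause) (C : Clause) (l : Lit) : Prop :=
  ex l.var = true ∧ l ∈ C ∧ ∀ D ∈ φ, l.neg ∈ D → ∃ k ∈ C, k.var < l.var ∧ k.neg ∈ D

/-- One step of blocked clause elimination: remove one blocked clause. -/
def BCEStep (ex : Var → Bool) (φ φ' : Finset Clause) : Prop :=
  ∃ C ∈ φ, (∃ l, BlockedIn ex φ C l) ∧ φ' = φ.erase C

/-- The side-condition for eliminating the existential variable `x` from the matrix `φ`. -/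
def VEside (x : Var) (φ : Finset Clause) : Prop :=
  ∀ C ∈ φ, (⟨x, true⟩ : Lit) ∈ C → (∃ k ∈ C, x < k.var) →
    ∀ D ∈ φ, (⟨x, false⟩ : Lit) ∈ D → ∃ z ∈ C, z.var < x ∧ z.neg ∈ D

/-- The set of all defined resolvents on `x` between the clauses of `φ` containing the
literal `x` and those containing `x̄`. -/
def VEresolvents (x : Var) (φ : Finset Clause) : Finset Clause :=
  ((φ ×ˢ φ).filter fun q => ResOk ⟨x, true⟩ q.1 q.2).image
    fun q => resOf ⟨x, true⟩ q.1 q.2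

/-- Variable elimination of `x`: replace all clauses mentioning `x` by all defined
resolvents on `x`. -/
def VEapply (x : Var) (φ : Finset Clause) : Finset Clause :=
  φ.filter (fun C => (⟨x, true⟩ : Lit) ∉ C ∧ (⟨x, false⟩ : Lit) ∉ C) ∪ VEresolvents x φ

/-- The variables of Φₙ (0-indexed): `uᵢ` is variable `2*i`, `eᵢ` is variable `2*i+1`,
so the prefix `∀u₀∃e₀…∀u_{n-1}∃e_{n-1}` is the natural order. -/
def uLit (i : ℕ) (b : Bool) : Lit := ⟨2 * i, b⟩
def eLit (i : ℕ) (b : Bool) : Lit := ⟨2 * i + 1, b⟩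

/-- The prefix of Φₙ: even variables universal, odd variables existential. -/
def phiEx : Var → Bool := fun v => v % 2 == 1

/-- The clause `ūᵢ ∨ eᵢ`. -/
def posClause (i : ℕ) : Clause := {uLit i false, eLit i true}
/-- The clause `uᵢ ∨ ēᵢ`. -/
def negClause (i : ℕ) : Clause := {uLit i true, eLit i false}

/-- The matrix of Φₙ: `⋀_{i<n} (ūᵢ ∨ eᵢ) ∧ (uᵢ ∨ ēᵢ)`. -/
def PhiMatrix (n : ℕ) : Finset Clause :=
  (Finset.range n).biUnion fun i => {posClause i, negClause i}

/-- The set `W` of witnesses for the literal `l` being blocked in the clause `C`. -/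
def witnesses (φ : Finset Clause) (C : Clause) (l : Lit) : Finset Lit :=
  C.filter fun k => k ≠ l ∧ k.var < l.var ∧ ∃ D ∈ φ, k.neg ∈ D ∧ l.neg ∈ D

/-- `φ` with all literals not less than `x` deleted from each clause. -/
def restrictBelow (x : Var) (φ : Finset Clause) : Finset Clause :=
  φ.image fun C => C.filter fun l => l.var < x

/-!
Tracing a term-resolution proof of the empty term backwards along terms that agree with a fixed
universal assignment `τ` always ends at a model-generated term agreeing with `τ`: ∃-reduction
removes no universal literal, and of the two antecedents of a resolvent at least one agrees with
`τ`. A consistent term generated from the matrix of `Φₙ` contains `uᵢ` or `ūᵢ` for every `i`,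
since it meets both `ūᵢ ∨ eᵢ` and `uᵢ ∨ ēᵢ`; so it agrees with only one assignment to
`u₀, …, uₙ₋₁`, and the proof contains a different such term for each of the `2ⁿ` assignments.
-/

@[simp]
lemma Lit.neg_neg (l : Lit) : l.neg.neg = l := by
  simp [Lit.neg]

lemma evalLit_neg (τ : Var → Bool) (l : Lit) : evalLit τ l.neg = !evalLit τ l := by
  rcases l with ⟨v, _ | _⟩ <;> simp [evalLit, Lit.neg]

section Agrees

variable {ex τ : Var → Bool}

lemma agrees_empty : Agrees ex τ ∅ := by
  simp [Agrees]

lemma Agrees.of_resOf {p : Lit} {A B : Term} (h : Agrees ex τ (resOf p A B)) :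
    Agrees ex τ A ∨ Agrees ex τ B := by
  by_contra! hc
  obtain ⟨⟨l₁, hex₁, hl₁, hv₁⟩, ⟨l₂, hex₂, hl₂, hv₂⟩⟩ :
      (∃ l, ex l.var = false ∧ l.neg ∈ A ∧ evalLit τ l = true) ∧
        (∃ l, ex l.var = false ∧ l.neg ∈ B ∧ evalLit τ l = true) := by
    simpa [Agrees] using hc
  have hp₁ : l₁.neg = p := by
    by_contra hne
    exact h ⟨l₁, hex₁, Finset.mem_union_left _ (Finset.mem_erase.2 ⟨hne, hl₁⟩), hv₁⟩
  have hp₂ : l₂.neg = p.neg := by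
    by_contra hne
    exact h ⟨l₂, hex₂, Finset.mem_union_right _ (Finset.mem_erase.2 ⟨hne, hl₂⟩), hv₂⟩
  obtain rfl : l₁ = p.neg := by rw [← hp₁, Lit.neg_neg]
  obtain rfl : l₂ = p := by simpa using congrArg Lit.neg hp₂
  simp [evalLit_neg, hv₂] at hv₁

lemma Agrees.of_isExistsReduct {T T' : Term} (hred : IsExistsReduct ex T T')
    (h : Agrees ex τ T') : Agrees ex τ T := by
  rintro ⟨l, hex, hl, hv⟩
  exact h ⟨l, hex, (hred l.neg).2 ⟨hl, Or.inl (by simpa [Lit.neg] using hex)⟩, hv⟩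

end Agrees

lemma IsTermResProof.exists_modelGen_agrees {ex : Var → Bool} {φ : Finset Clause}
    {π : List Term} {T : Term} (hπ : IsTermResProof ex φ π T) {τ : Var → Bool}
    (hT : Agrees ex τ T) :
    ∃ T' ∈ π, ModelGen φ T' ∧ LitSetOk T' ∧ Agrees ex τ T' := by
  obtain ⟨hne, hlast, hstep⟩ := hπ
  suffices h : ∀ i : Fin π.length, Agrees ex τ (π.get i) →
      ∃ T' ∈ π, ModelGen φ T' ∧ LitSetOk T' ∧ Agrees ex τ T' by
    have hlen : π.length - 1 < π.length := by
      have := List.length_pos_iff.2 hne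
      omega
    refine h ⟨π.length - 1, hlen⟩ ?_
    rw [List.getLast?_eq_getElem?, List.getElem?_eq_getElem hlen, Option.some_inj] at hlast
    simpa [hlast] using hT
  intro i
  induction i using WellFoundedLT.induction with
  | ind i ih =>
    intro hi
    rcases (hstep i).2 with hgen | ⟨j, hji, hred⟩ | ⟨j, k, hji, hki, p, -, hres⟩
    · exact ⟨π.get i, List.get_mem _ _, hgen, (hstep i).1, hi⟩
    · exact ih j hji (hi.of_isExistsReduct hred)
    · rcases (hres ▸ hi).of_resOf with hj | hk
      · exact ih j hji hj
      · exact ih k hki hk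

lemma modelGen_phiMatrix_exists_uLit_mem {n : ℕ} {T : Term} (hok : LitSetOk T)
    (hgen : ModelGen (PhiMatrix n) T) {i : ℕ} (hi : i < n) : ∃ b, uLit i b ∈ T := by
  have hmem : ∀ C ∈ ({posClause i, negClause i} : Finset Clause), C ∈ PhiMatrix n :=
    fun C hC => Finset.mem_biUnion.2 ⟨i, Finset.mem_range.2 hi, hC⟩
  obtain ⟨l₁, hl₁, hl₁T⟩ := hgen (posClause i) (hmem _ (by simp))
  obtain ⟨l₂, hl₂, hl₂T⟩ := hgen (negClause i) (hmem _ (by simp))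
  simp only [posClause, negClause, Finset.mem_insert, Finset.mem_singleton] at hl₁ hl₂
  rcases hl₁ with rfl | rfl
  · exact ⟨false, hl₁T⟩
  rcases hl₂ with rfl | rfl
  · exact ⟨true, hl₂T⟩
  exact absurd hl₂T (hok _ hl₁T)

lemma Agrees.eq_of_uLit_mem {τ : Var → Bool} {T : Term} (h : Agrees phiEx τ T) {i : ℕ}
    {b : Bool} (hb : uLit i b ∈ T) : τ (2 * i) = b := by
  by_contra hne
  refine h ⟨uLit i !b, by simp [phiEx, uLit], by simpa [Lit.neg, uLit] using hb, ?_⟩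
  cases b <;> simpa [evalLit, uLit] using hne

def uAssignment (n : ℕ) (f : Fin n → Bool) : Var → Bool :=
  fun v => if h : v / 2 < n then f ⟨v / 2, h⟩ else false

lemma uAssignment_uVar {n : ℕ} (f : Fin n → Bool) (i : Fin n) :
    uAssignment n f (2 * i) = f i := by
  simp [uAssignment]

theorem stmt0_general (n : ℕ) (π : List Term)
    (hπ : IsTermResProof phiEx (PhiMatrix n) π (∅ : Term)) :
    2 ^ n ≤ π.toFinset.card := by
  choose T hTπ hgen hok hagree using
    fun f : Fin n → Bool => hπ.exists_modelGen_agrees (τ := uAssignment n f) agrees_empty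
  have hinj : Function.Injective T := by
    intro f g hfg
    funext i
    obtain ⟨b, hb⟩ := modelGen_phiMatrix_exists_uLit_mem (hok f) (hgen f) i.isLt
    have hf := (hagree f).eq_of_uLit_mem hb
    have hg := (hagree g).eq_of_uLit_mem (hfg ▸ hb)
    rw [uAssignment_uVar] at hf hg
    rw [hf, hg]
  calc 2 ^ n = (Finset.univ : Finset (Fin n → Bool)).card := by simp
    _ ≤ π.toFinset.card :=
      Finset.card_le_card_of_injOn T (fun f _ => List.mem_toFinset.2 (hTπ f)) hinj.injOn

theorem stmt0 (n : ℕ) (hn : 1 ≤ n) (π : List Term)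
    (hπ : IsTermResProof phiEx (PhiMatrix n) π (∅ : Term)) :
    2 ^ n ≤ π.toFinset.card :=
  stmt0_general n π hπ
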